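/- Let G be a graph with c-outgrowth (K, u, v), and let M = X ∪ Y be a minimal θ_c-model in G with X, Y disjoint connected sets crossed by at least c edges. If M does not contain u, then there exists a θ_c-model of G disjoint from V(K). -/

import Mathlib

open Finset

attribute [local instance] Classical.propDecidable

/-- A finite loopless multigraph on vertex set `V`. -/
structure Multigraph (V : Type) where
  E : Type
  [fintE : Fintype E]
  ends : E → Sym2 V
  loopless : ∀ e, ¬ (ends e).IsDiag

attribute [instance] Multigraph.fintE

namespace Multigraph

variable {V : Type} [Fintype V] [DecidableEq V] (G : Multigraph V)

/-- The set of edges with one endpoint in `X` and the other in `Y`. -/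
noncomputable def crossing (X Y : Finset V) : Finset G.E :=
  Finset.univ.filter (fun e => ∃ x ∈ X, ∃ y ∈ Y, G.ends e = s(x, y))

/-- The set of edges with both endpoints in `S`. -/
noncomputable def inside (S : Finset V) : Finset G.E :=
  Finset.univ.filter (fun e => ∀ v ∈ G.ends e, v ∈ S)

/-- Adjacency between two vertices. -/
def AdjV (x y : V) : Prop := ∃ e : G.E, G.ends e = s(x, y)

/-- Adjacency within a vertex subset. -/
def AdjOn (S : Finset V) (x y : V) : Prop := x ∈ S ∧ y ∈ S ∧ G.AdjV x y

/-- A vertex set is connected if it is nonempty and any two of its vertices are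
joined by a path inside the set. -/
def ConnectedSet (S : Finset V) : Prop :=
  S.Nonempty ∧ ∀ x ∈ S, ∀ y ∈ S, Relation.ReflTransGen (G.AdjOn S) x y

/-- A θ_c-model: two disjoint connected vertex sets crossed by at least `c` edges. -/
def ThetaModel (c : ℕ) (X Y : Finset V) : Prop :=
  Disjoint X Y ∧ G.ConnectedSet X ∧ G.ConnectedSet Y ∧ c ≤ (G.crossing X Y).card

/-- `G` contains θ_c as a minor. -/
def HasThetaMinor (c : ℕ) : Prop := ∃ X Y, G.ThetaModel c X Y

/-- A cut: the set of edges crossing some vertex bipartition. -/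
def IsCut (F : Finset G.E) : Prop := ∃ A : Finset V, F = G.crossing A Aᶜ

/-- A bond: a minimal nonempty cut. -/
def IsBond (F : Finset G.E) : Prop :=
  G.IsCut F ∧ F.Nonempty ∧ ∀ F' ⊂ F, F'.Nonempty → ¬ G.IsCut F'

/-- Edge-degree of a vertex: number of incident edges (with multiplicity). -/
noncomputable def edeg (v : V) : ℕ :=
  (Finset.univ.filter (fun e : G.E => v ∈ G.ends e)).card

/-- The multiplicity of the (multi-)edge between `x` and `y`. -/
noncomputable def mult (x y : V) : ℕ :=
  (Finset.univ.filter (fun e : G.E => G.ends e = s(x, y))).card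

/-- The set of neighbours of a vertex. -/
noncomputable def nbrs (v : V) : Finset V := Finset.univ.filter (fun u => G.AdjV v u)

/-- The induced subgraph on a vertex subset (kept on the same vertex type;
only edges with both endpoints in `S` survive). -/
noncomputable def induce (S : Finset V) : Multigraph V where
  E := {e : G.E // ∀ v ∈ G.ends e, v ∈ S}
  ends e := G.ends e.1
  loopless e := G.loopless e.1

/-- `S` is a c-bond cover: `G - S` is θ_c-minor-free. -/
def CBondCover (c : ℕ) (S : Finset V) : Prop :=
  ¬ (G.induce Sᶜ).HasThetaMinor c

/-- The graph `K^{(u,v)}`: the induced subgraph on `K ∪ {u,v}` with all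
`u`-`v` edges removed. -/
noncomputable def outK (K : Finset V) (u v : V) : Multigraph V where
  E := {e : G.E // (∀ x ∈ G.ends e, x ∈ insert u (insert v K)) ∧ G.ends e ≠ s(u, v)}
  ends e := G.ends e.1
  loopless e := G.loopless e.1

/-- Add `i` parallel edges between the distinct vertices `u` and `v`. -/
noncomputable def addPar (u v : V) (huv : u ≠ v) (i : ℕ) : Multigraph V where
  E := G.E ⊕ Fin i
  ends := Sum.elim G.ends (fun _ => s(u, v))
  loopless := by
    rintro (e | e)
    · exact G.loopless e
    · simpa using huv

/-- A cluster collection: a nonempty collection of pairwise disjoint,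
nonempty, connected vertex subsets. -/
def ClusterCollection (𝒞 : Finset (Finset V)) : Prop :=
  𝒞.Nonempty ∧ (∀ C ∈ 𝒞, C.Nonempty ∧ G.ConnectedSet C) ∧
    (∀ C ∈ 𝒞, ∀ D ∈ 𝒞, C ≠ D → Disjoint C D)

/-- The edges of `G` that are not internal to any cluster of `𝒞`;
these are exactly the edges surviving in `G/𝒞` when `𝒞` is a cluster partition. -/
noncomputable def interE (𝒞 : Finset (Finset V)) : Finset G.E :=
  Finset.univ.filter (fun e => ¬ ∃ C ∈ 𝒞, ∀ v ∈ G.ends e, v ∈ C)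

/-- A c-outgrowth `(K, u, v)` of `G`. -/
def IsOutgrowth (c : ℕ) (K : Finset V) (u v : V) : Prop :=
  u ≠ v ∧ u ∉ K ∧ v ∉ K ∧ K.Nonempty ∧
  (G.induce (Finset.univ \ {u, v})).ConnectedSet K ∧
  (∀ x ∈ K, ∀ y, G.AdjV x y → y ∈ K ∨ y = u ∨ y = v) ∧
  (∃ x ∈ K, G.AdjV x u) ∧ (∃ x ∈ K, G.AdjV x v) ∧
  ¬ (G.outK K u v).HasThetaMinor c

end Multigraph
namespace Multigraph

variable {V : Type} [Fintype V] [DecidableEq V]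

lemma adjV_symm (G : Multigraph V) {x y : V} (h : G.AdjV x y) : G.AdjV y x := by
  obtain ⟨e, he⟩ := h; exact ⟨e, he.trans Sym2.eq_swap⟩

lemma adjOn_symm (G : Multigraph V) (S : Finset V) : Symmetric (G.AdjOn S) := by
  rintro x y ⟨hx, hy, h⟩; exact ⟨hy, hx, G.adjV_symm h⟩

lemma mem_crossing (G : Multigraph V) {X Y : Finset V} {e : G.E} :
    e ∈ G.crossing X Y ↔ ∃ x ∈ X, ∃ y ∈ Y, G.ends e = s(x, y) := by
  simp [crossing]

lemma crossing_comm (G : Multigraph V) (X Y : Finset V) :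
    G.crossing X Y = G.crossing Y X := by
  ext e
  simp only [G.mem_crossing]
  constructor <;> rintro ⟨x, hx, y, hy, he⟩ <;>
    exact ⟨y, hy, x, hx, he.trans Sym2.eq_swap⟩

lemma thetaModel_symm (G : Multigraph V) {c : ℕ} {X Y : Finset V}
    (h : G.ThetaModel c X Y) : G.ThetaModel c Y X :=
  ⟨h.1.symm, h.2.2.1, h.2.1, by rw [G.crossing_comm]; exact h.2.2.2⟩

lemma connectedSet_singleton (G : Multigraph V) (x : V) : G.ConnectedSet {x} := by
  refine ⟨⟨x, Finset.mem_singleton_self x⟩, ?_⟩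
  intro a ha b hb
  rw [Finset.mem_singleton] at ha hb
  subst ha; subst hb; exact .refl

variable {G : Multigraph V} {c : ℕ} {K : Finset V} {u v : V}

lemma conn_subset_K (hN : ∀ x ∈ K, ∀ y, G.AdjV x y → y ∈ K ∨ y = u ∨ y = v)
    {S : Finset V} (hS : G.ConnectedSet S) (huS : u ∉ S) (hvS : v ∉ S)
    {x : V} (hxS : x ∈ S) (hxK : x ∈ K) : S ⊆ K := by
  intro y hy
  have h := hS.2 x hxS y hy
  induction h with
  | refl => exact hxK
  | tail _ h2 ih =>
    obtain ⟨hbS, hcS, hadj⟩ := h2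
    rcases hN _ (ih hbS) _ hadj with h | h | h
    · exact h
    · exact absurd (h ▸ hcS) huS
    · exact absurd (h ▸ hcS) hvS

lemma reach_v_out (hN : ∀ x ∈ K, ∀ y, G.AdjV x y → y ∈ K ∨ y = u ∨ y = v)
    {S : Finset V} (huS : u ∉ S)
    {x : V} (h : Relation.ReflTransGen (G.AdjOn S) x v) (hxK : x ∉ K) :
    Relation.ReflTransGen (G.AdjOn (S \ K)) x v := by
  revert hxK
  induction h using Relation.ReflTransGen.head_induction_on with
  | refl => intro _; exact .refl
  | head h' h ih =>
    rename_i a b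
    intro haK
    obtain ⟨haS, hbS, hadj⟩ := h'
    by_cases hbK : b ∈ K
    · rcases hN _ hbK _ (G.adjV_symm hadj) with h1 | h1 | h1
      · exact absurd h1 haK
      · exact absurd (h1 ▸ haS) huS
      · subst h1; exact .refl
    · exact .head ⟨Finset.mem_sdiff.mpr ⟨haS, haK⟩,
        Finset.mem_sdiff.mpr ⟨hbS, hbK⟩, hadj⟩ (ih hbK)

lemma reach_v_in (hN : ∀ x ∈ K, ∀ y, G.AdjV x y → y ∈ K ∨ y = u ∨ y = v)
    {S : Finset V} (huS : u ∉ S)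
    {x : V} (h : Relation.ReflTransGen (G.AdjOn S) x v)
    (hx : x ∈ S ∩ insert v K) :
    Relation.ReflTransGen (G.AdjOn (S ∩ insert v K)) x v := by
  revert hx
  induction h using Relation.ReflTransGen.head_induction_on with
  | refl => intro _; exact .refl
  | head h' h ih =>
    rename_i a b
    intro haM
    obtain ⟨haS, hbS, hadj⟩ := h'
    rcases Finset.mem_insert.mp (Finset.mem_inter.mp haM).2 with rfl | haK
    · exact .refl
    · rcases hN _ haK _ hadj with h1 | h1 | h1
      · exact .head ⟨haM, Finset.mem_inter.mpr
          ⟨hbS, Finset.mem_insert.mpr (Or.inr h1)⟩, hadj⟩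
          (ih (Finset.mem_inter.mpr ⟨hbS, Finset.mem_insert.mpr (Or.inr h1)⟩))
      · exact absurd (h1 ▸ hbS) huS
      · subst h1
        exact .head ⟨haM, Finset.mem_inter.mpr
          ⟨hbS, Finset.mem_insert_self _ _⟩, hadj⟩
          (ih (Finset.mem_inter.mpr ⟨hbS, Finset.mem_insert_self _ _⟩))

lemma adjOn_outK {S : Finset V} (hS : S ⊆ insert v K) (huS : u ∉ S)
    {x y : V} (h : G.AdjOn S x y) : (G.outK K u v).AdjOn S x y := by
  obtain ⟨hx, hy, e, he⟩ := h
  have hmem : ∀ w ∈ G.ends e, w ∈ insert u (insert v K) := by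
    intro w hw
    rw [he, Sym2.mem_iff] at hw
    rcases hw with rfl | rfl
    · exact Finset.mem_insert.mpr (Or.inr (hS hx))
    · exact Finset.mem_insert.mpr (Or.inr (hS hy))
  have hne : G.ends e ≠ s(u, v) := by
    rw [he]
    intro hcon
    rcases Sym2.eq_iff.mp hcon with ⟨rfl, -⟩ | ⟨-, rfl⟩
    · exact huS hx
    · exact huS hy
  exact ⟨hx, hy, ⟨⟨e, hmem, hne⟩, he⟩⟩

lemma connected_outK {S : Finset V} (hS : S ⊆ insert v K) (huS : u ∉ S)
    (h : G.ConnectedSet S) : (G.outK K u v).ConnectedSet S :=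
  ⟨h.1, fun x hx y hy => Relation.ReflTransGen.mono (r := G.AdjOn S) (p := (G.outK K u v).AdjOn S)
    (fun _ _ hab => adjOn_outK hS huS hab) x y (h.2 x hx y hy)⟩

lemma card_crossing_le_outK {X Y : Finset V}
    (hX : X ⊆ insert v K) (hY : Y ⊆ insert v K) (huX : u ∉ X) (huY : u ∉ Y) :
    (G.crossing X Y).card ≤ ((G.outK K u v).crossing X Y).card := by
  apply Finset.card_le_card_of_surjOn (fun e => e.1)
  intro e he
  rw [Finset.mem_coe, G.mem_crossing] at he
  obtain ⟨x, hx, y, hy, hends⟩ := he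
  have hmem : ∀ w ∈ G.ends e, w ∈ insert u (insert v K) := by
    intro w hw
    rw [hends, Sym2.mem_iff] at hw
    rcases hw with rfl | rfl
    · exact Finset.mem_insert.mpr (Or.inr (hX hx))
    · exact Finset.mem_insert.mpr (Or.inr (hY hy))
  have hne : G.ends e ≠ s(u, v) := by
    rw [hends]
    intro hcon
    rcases Sym2.eq_iff.mp hcon with ⟨rfl, -⟩ | ⟨-, rfl⟩
    · exact huX hx
    · exact huY hy
  refine ⟨⟨e, hmem, hne⟩, ?_, rfl⟩
  refine Finset.mem_coe.mpr ((G.outK K u v).mem_crossing.mpr ?_)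
  exact ⟨x, hx, y, hy, hends⟩

lemma outK_no_model (hog : G.IsOutgrowth c K u v) {X Y : Finset V}
    (hX : X ⊆ insert v K) (hY : Y ⊆ insert v K) (huX : u ∉ X) (huY : u ∉ Y)
    (hM : G.ThetaModel c X Y) : False := by
  exact hog.2.2.2.2.2.2.2.2 ⟨X, Y, hM.1, connected_outK hX huX hM.2.1,
    connected_outK hY huY hM.2.2.1,
    le_trans hM.2.2.2 (card_crossing_le_outK hX hY huX huY)⟩

lemma outgrowth_c_pos (hog : G.IsOutgrowth c K u v) : 0 < c := by
  rcases Nat.eq_zero_or_pos c with rfl | h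
  · exact absurd ⟨{u}, {v}, Finset.disjoint_singleton.mpr hog.1,
      (G.outK K u v).connectedSet_singleton u,
      (G.outK K u v).connectedSet_singleton v, Nat.zero_le _⟩
      hog.2.2.2.2.2.2.2.2
  · exact h

lemma aux_one_side (hog : G.IsOutgrowth c K u v) {X Y : Finset V}
    (hM : G.ThetaModel c X Y) (huX : u ∉ X) (huY : u ∉ Y)
    (hYK : Disjoint Y K) (hXK : ¬ Disjoint X K) :
    ∃ X' Y' : Finset V, G.ThetaModel c X' Y' ∧ Disjoint (X' ∪ Y') K := by
  obtain ⟨x0, hx0X, hx0K⟩ := Finset.not_disjoint_iff.mp hXK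
  have hN := hog.2.2.2.2.2.1
  by_cases hvX : v ∈ X
  · -- replace X by X \ K
    have hvXK : v ∈ X \ K := Finset.mem_sdiff.mpr ⟨hvX, hog.2.2.1⟩
    have hreach : ∀ x ∈ X \ K, Relation.ReflTransGen (G.AdjOn (X \ K)) x v := by
      intro x hx
      obtain ⟨hxX, hxK⟩ := Finset.mem_sdiff.mp hx
      exact reach_v_out hN huX (hM.2.1.2 x hxX v hvX) hxK
    have hconn : G.ConnectedSet (X \ K) := by
      refine ⟨⟨v, hvXK⟩, fun x hx y hy => ?_⟩
      exact (hreach x hx).trans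
        ((@Relation.ReflTransGen.symmetric _ _ ⟨fun _ _ h => G.adjOn_symm _ h⟩).symm _ _ (hreach y hy))
    have hcross : G.crossing X Y ⊆ G.crossing (X \ K) Y := by
      intro e he
      rw [G.mem_crossing] at he ⊢
      obtain ⟨x, hxX, y, hyY, hends⟩ := he
      refine ⟨x, Finset.mem_sdiff.mpr ⟨hxX, ?_⟩, y, hyY, hends⟩
      intro hxK
      rcases hN x hxK y ⟨e, hends⟩ with h | h | h
      · exact Finset.disjoint_left.mp hYK hyY h
      · exact huY (h ▸ hyY)
      · exact Finset.disjoint_left.mp hM.1 (h ▸ hvX) hyY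
    exact ⟨X \ K, Y, ⟨Finset.disjoint_of_subset_left Finset.sdiff_subset hM.1,
      hconn, hM.2.2.1, le_trans hM.2.2.2 (Finset.card_le_card hcross)⟩,
      Finset.disjoint_union_left.mpr ⟨Finset.sdiff_disjoint, hYK⟩⟩
  · have hXsub : X ⊆ K := conn_subset_K hN hM.2.1 huX hvX hx0X hx0K
    by_cases hvY : v ∈ Y
    · exfalso
      have hcross : G.crossing X Y ⊆ G.crossing X {v} := by
        intro e he
        rw [G.mem_crossing] at he ⊢
        obtain ⟨x, hxX, y, hyY, hends⟩ := he
        refine ⟨x, hxX, y, ?_, hends⟩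
        rcases hN x (hXsub hxX) y ⟨e, hends⟩ with h | h | h
        · exact absurd h (Finset.disjoint_left.mp hYK hyY)
        · exact absurd (h ▸ hyY) huY
        · rw [Finset.mem_singleton]; exact h
      refine outK_no_model hog (hXsub.trans (Finset.subset_insert _ _))
        (Finset.singleton_subset_iff.mpr (Finset.mem_insert_self _ _)) huX
        (fun h => hog.1 (Finset.mem_singleton.mp h)) ?_
      exact ⟨Finset.disjoint_singleton_right.mpr hvX, hM.2.1,
        G.connectedSet_singleton v,
        le_trans hM.2.2.2 (Finset.card_le_card hcross)⟩
    · exfalso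
      have hemp : G.crossing X Y = ∅ := by
        rw [Finset.eq_empty_iff_forall_notMem]
        intro e he
        rw [G.mem_crossing] at he
        obtain ⟨x, hxX, y, hyY, hends⟩ := he
        rcases hN x (hXsub hxX) y ⟨e, hends⟩ with h | h | h
        · exact Finset.disjoint_left.mp hYK hyY h
        · exact huY (h ▸ hyY)
        · exact hvY (h ▸ hyY)
      have hle := hM.2.2.2
      rw [hemp, Finset.card_empty] at hle
      have hc := outgrowth_c_pos hog
      omega
 
lemma aux_both (hog : G.IsOutgrowth c K u v) {X Y : Finset V}
    (hM : G.ThetaModel c X Y) (huX : u ∉ X) (huY : u ∉ Y) (hvX : v ∈ X)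
    {y0 : V} (hy0Y : y0 ∈ Y) (hy0K : y0 ∈ K) : False := by
  have hN := hog.2.2.2.2.2.1
  have hvY : v ∉ Y := Finset.disjoint_left.mp hM.1 hvX
  have hYsub : Y ⊆ K := conn_subset_K hN hM.2.2.1 huY hvY hy0Y hy0K
  have hvX' : v ∈ X ∩ insert v K :=
    Finset.mem_inter.mpr ⟨hvX, Finset.mem_insert_self _ _⟩
  have hreach : ∀ x ∈ X ∩ insert v K,
      Relation.ReflTransGen (G.AdjOn (X ∩ insert v K)) x v := by
    intro x hx
    exact reach_v_in hN huX (hM.2.1.2 x (Finset.mem_inter.mp hx).1 v hvX) hx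
  have hconn : G.ConnectedSet (X ∩ insert v K) := by
    refine ⟨⟨v, hvX'⟩, fun x hx y hy => ?_⟩
    exact (hreach x hx).trans
      ((@Relation.ReflTransGen.symmetric _ _ ⟨fun _ _ h => G.adjOn_symm _ h⟩).symm _ _ (hreach y hy))
  have hcross : G.crossing X Y ⊆ G.crossing (X ∩ insert v K) Y := by
    intro e he
    rw [G.mem_crossing] at he ⊢
    obtain ⟨x, hxX, y, hyY, hends⟩ := he
    refine ⟨x, Finset.mem_inter.mpr ⟨hxX, ?_⟩, y, hyY, hends⟩
    rcases hN y (hYsub hyY) x (G.adjV_symm ⟨e, hends⟩) with h | h | h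
    · exact Finset.mem_insert.mpr (Or.inr h)
    · exact absurd (h ▸ hxX) huX
    · exact Finset.mem_insert.mpr (Or.inl h)
  refine outK_no_model hog Finset.inter_subset_right
    (hYsub.trans (Finset.subset_insert _ _))
    (fun h => huX (Finset.mem_inter.mp h).1) huY ?_
  exact ⟨Finset.disjoint_of_subset_left Finset.inter_subset_left hM.1,
    hconn, hM.2.2.1, le_trans hM.2.2.2 (Finset.card_le_card hcross)⟩

end Multigraph
/-- a minimal θ_c-model avoiding u of a graph with c-outgrowth
(K,u,v) yields a θ_c-model disjoint from V(K). -/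
theorem minimal_model_avoids_outgrowth {V : Type} [Fintype V] [DecidableEq V]
    (G : Multigraph V) (c : ℕ) (K : Finset V) (u v : V)
    (hog : G.IsOutgrowth c K u v)
    (X Y : Finset V) (hM : G.ThetaModel c X Y)
    (hmin : ∀ X' ⊆ X, ∀ Y' ⊆ Y, G.ThetaModel c X' Y' → X' = X ∧ Y' = Y)
    (hu : u ∉ X ∪ Y) :
    ∃ X' Y' : Finset V, G.ThetaModel c X' Y' ∧ Disjoint (X' ∪ Y') K := by
  rw [Finset.mem_union] at hu
  push_neg at hu
  obtain ⟨huX, huY⟩ := hu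
  have hN := hog.2.2.2.2.2.1
  by_cases hXK : Disjoint X K
  · by_cases hYK : Disjoint Y K
    · exact ⟨X, Y, hM, Finset.disjoint_union_left.mpr ⟨hXK, hYK⟩⟩
    · obtain ⟨X', Y', h1, h2⟩ :=
        Multigraph.aux_one_side hog (G.thetaModel_symm hM) huY huX hXK hYK
      exact ⟨X', Y', h1, h2⟩
  · by_cases hYK : Disjoint Y K
    · exact Multigraph.aux_one_side hog hM huX huY hYK hXK
    · exfalso
      obtain ⟨x0, hx0X, hx0K⟩ := Finset.not_disjoint_iff.mp hXK
      obtain ⟨y0, hy0Y, hy0K⟩ := Finset.not_disjoint_iff.mp hYK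
      by_cases hvX : v ∈ X
      · exact Multigraph.aux_both hog hM huX huY hvX hy0Y hy0K
      · by_cases hvY : v ∈ Y
        · exact Multigraph.aux_both hog (G.thetaModel_symm hM) huY huX hvY hx0X hx0K
        · have hXsub : X ⊆ K :=
            Multigraph.conn_subset_K hN hM.2.1 huX hvX hx0X hx0K
          have hYsub : Y ⊆ K :=
            Multigraph.conn_subset_K hN hM.2.2.1 huY hvY hy0Y hy0K
          exact Multigraph.outK_no_model hog
            (hXsub.trans (Finset.subset_insert _ _))
            (hYsub.trans (Finset.subset_insert _ _)) huX huY hM
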